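/- arXiv:1505.05785 — 3 statements merged into one kernel-verified Lean document; each statement's English description precedes it below -/
import Mathlib

section
/- Let G be a finite connected simple graph with boundary B and injective boundary values u : B → ℝ as in the context, and let 𝓔 : E → ℝ assign a positive real energy to each edge. Consider the set S of functions h : V → ℝ extending u with h(x) ≠ h(y) for every edge xy and satisfying Σ_{y ∼ x} 𝓔_{xy}/(h(x) − h(y)) = 0 at every interior vertex x. Then the map sending h ∈ S to the orientation of G that directs each edge from its larger h-value to its smaller h-value is a bijection from S onto the set Σ_u of orientations compatible with u. -/
/-!
An enharmonic solution `h` orients every edge downhill. At an interior vertex the terms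
`𝓔 xy / (h x - h y)` of the equation cannot all have the same sign, so the vertex is neither a
source nor a sink, and the orientation is compatible with `u`.

Injectivity: if `h₁` and `h₂` induce the same orientation, summing the difference of their
equations against `h₁ - h₂` by parts gives `∑ 𝓔 (1/a - 1/b)(a - b) = 0` over the edges, where `a`
and `b` are the increments of `h₁` and `h₂` along the edge. These have the same sign, so every
term is `≤ 0`, hence `a = b`; thus `h₁ - h₂` is constant, and it vanishes on the boundary.

Surjectivity: given a compatible `σ`, the continuous function `Mfun h = ∏ |h x - h y| ^ 𝓔 xy`
attains its maximum on the compact set of extensions of `u` that weakly decrease along `σ`. The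
set contains a strictly decreasing extension, where `Mfun > 0`, so the maximiser decreases
strictly along `σ`. Moving a single interior value then keeps it in the set, and the vanishing of
the logarithmic derivative in that coordinate is the enharmonic equation there.
-/

attribute [local instance] Classical.propDecidable

structure GraphOrientation {V : Type*} (G : SimpleGraph V) where
  dir : V → V → Prop
  dir_adj : ∀ x y, dir x y → G.Adj x y
  dir_total : ∀ x y, G.Adj x y → (dir x y ↔ ¬ dir y x)

variable {V : Type*} [Fintype V] [DecidableEq V]

/-- σ is compatible with boundary values u. -/
def Compatible (G : SimpleGraph V) (B : Set V) (u : V → ℝ) (σ : GraphOrientation G) : Prop :=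
  (∀ x, ¬ Relation.TransGen σ.dir x x) ∧
  (∀ x, x ∉ B → (∃ y, σ.dir x y) ∧ (∃ y, σ.dir y x)) ∧
  (∀ a ∈ B, ∀ b ∈ B, Relation.TransGen σ.dir a b → u b < u a)

/-- B has ≥ 2 vertices and every edge lies on a simple path between distinct boundary vertices. -/
def BoundaryOK (G : SimpleGraph V) (B : Set V) : Prop :=
  2 ≤ B.ncard ∧ ∀ e ∈ G.edgeSet, ∃ a ∈ B, ∃ b ∈ B, a ≠ b ∧
    ∃ p : G.Walk a b, p.IsPath ∧ e ∈ p.edges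

/-- h is c-harmonic at each interior vertex. -/
def Harmonic (G : SimpleGraph V) (B : Set V) (c : Sym2 V → ℝ) (h : V → ℝ) : Prop :=
  ∀ x, x ∉ B → ∑ y ∈ G.neighborFinset x, c s(x, y) * (h x - h y) = 0

/-- the enharmonic (fixed-energy) equation at x. -/
def EnharmonicAt (G : SimpleGraph V) (𝓔 : Sym2 V → ℝ) (h : V → ℝ) (x : V) : Prop :=
  ∑ y ∈ G.neighborFinset x, 𝓔 s(x, y) / (h x - h y) = 0

/-- the polytope of functions extending u and strictly decreasing along σ. -/
def FuSigma (G : SimpleGraph V) (B : Set V) (u : V → ℝ) (σ : GraphOrientation G) : Set (V → ℝ) :=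
  {h | (∀ b ∈ B, h b = u b) ∧ ∀ x y, σ.dir x y → h y < h x}

noncomputable def LogM (G : SimpleGraph V) (σ : GraphOrientation G) (𝓔 : Sym2 V → ℝ)
    (h : V → ℝ) : ℝ :=
  ∑ p ∈ Finset.univ.filter (fun p : V × V => σ.dir p.1 p.2),
    𝓔 s(p.1, p.2) * Real.log (h p.1 - h p.2)

noncomputable def Mfun (G : SimpleGraph V) (𝓔 : Sym2 V → ℝ) (h : V → ℝ) : ℝ :=
  ∏ e ∈ G.edgeFinset,
    Sym2.lift ⟨fun x y => |h x - h y| ^ 𝓔 s(x, y),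
      by intro x y; simp only []; rw [abs_sub_comm, Sym2.eq_swap]⟩ e

/-- The set of solutions of the enharmonic equations extending u with distinct values across
every edge. -/
def EnhSols (G : SimpleGraph V) (B : Set V) (u : V → ℝ) (𝓔 : Sym2 V → ℝ) : Set (V → ℝ) :=
  {h | (∀ b ∈ B, h b = u b) ∧ (∀ x y, G.Adj x y → h x ≠ h y) ∧
    ∀ x, x ∉ B → EnharmonicAt G 𝓔 h x}

open Finset Relation Filter Topology Function

section Relations

variable {α : Type*} {r : α → α → Prop}

lemma lt_of_transGen {β : Type*} [Preorder β] {f : α → β} (hf : ∀ x y, r x y → f y < f x)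
    {x y : α} (hxy : TransGen r x y) : f y < f x := by
  induction hxy with
  | single h => exact hf _ _ h
  | tail _ h ih => exact (hf _ _ h).trans ih

lemma le_of_reflTransGen {β : Type*} [Preorder β] {f : α → β} (hf : ∀ x y, r x y → f y ≤ f x)
    {x y : α} (hxy : ReflTransGen r x y) : f y ≤ f x := by
  induction hxy with
  | refl => exact le_rfl
  | tail _ h ih => exact (hf _ _ h).trans ih

lemma exists_reflTransGen_mem [Finite α] {B : Set α} (hacyc : ∀ x, ¬ TransGen r x x)
    (hout : ∀ x ∉ B, ∃ y, r x y) (x : α) : ∃ b ∈ B, ReflTransGen r x b := by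
  have hwf : WellFounded (swap r) := by
    have : Std.Irrefl (TransGen (swap r)) := ⟨fun a h => hacyc a (transGen_swap.1 h)⟩
    exact Subrelation.wf TransGen.single (Finite.wellFounded_of_trans_of_irrefl _)
  induction x using hwf.induction with
  | _ x ih =>
    by_cases hx : x ∈ B
    · exact ⟨x, hx, .refl⟩
    · obtain ⟨y, hxy⟩ := hout x hx
      obtain ⟨b, hb, hyb⟩ := ih y hxy
      exact ⟨b, hb, .head hxy hyb⟩

lemma exists_mem_reflTransGen [Finite α] {B : Set α} (hacyc : ∀ x, ¬ TransGen r x x)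
    (hin : ∀ x ∉ B, ∃ y, r y x) (x : α) : ∃ a ∈ B, ReflTransGen r a x := by
  obtain ⟨a, ha, hxa⟩ := exists_reflTransGen_mem (r := swap r)
    (fun x h => hacyc x (transGen_swap.1 h)) hin x
  exact ⟨a, ha, reflTransGen_swap.1 hxa⟩

lemma exists_strictAnti_mem_Icc [Fintype α] (hacyc : ∀ x, ¬ TransGen r x x) :
    ∃ t : α → ℝ, (∀ x, t x ∈ Set.Icc 0 1) ∧ ∀ x y, r x y → t y < t x := by
  refine ⟨fun x => #{z | ReflTransGen r x z} / Fintype.card α, fun x =>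
    ⟨by positivity, div_le_one_of_le₀ (mod_cast card_le_univ _) (by positivity)⟩,
    fun x y hxy => ?_⟩
  have hcard : #{z | ReflTransGen r y z} < #{z | ReflTransGen r x z} := by
    refine card_lt_card ((ssubset_iff_of_subset fun z hz => ?_).2 ⟨x, ?_, fun hx => ?_⟩)
    · simp only [mem_filter, mem_univ, true_and] at hz ⊢
      exact hz.head hxy
    · simpa using ReflTransGen.refl
    · simp only [mem_filter, mem_univ, true_and] at hx
      exact hacyc x (.head' hxy hx)
  exact div_lt_div_of_pos_right (mod_cast hcard) (mod_cast Fintype.card_pos_iff.2 ⟨x⟩)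

/-- The extension at `x` interpolates between the largest boundary value below `x` and the
smallest one above it, with parameter a rank that decreases strictly along `r`. -/
theorem exists_strictAnti_extension [Fintype α] {B : Set α} {u : α → ℝ}
    (hacyc : ∀ x, ¬ TransGen r x x) (hu : ∀ a ∈ B, ∀ b ∈ B, TransGen r a b → u b < u a)
    (hdown : ∀ x, ∃ b ∈ B, ReflTransGen r x b) (hup : ∀ x, ∃ a ∈ B, ReflTransGen r a x) :
    ∃ h : α → ℝ, (∀ b ∈ B, h b = u b) ∧ ∀ x y, r x y → h y < h x := by
  have hu' : ∀ a ∈ B, ∀ b ∈ B, ReflTransGen r a b → u b ≤ u a := fun a ha b hb hab =>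
    (reflTransGen_iff_eq_or_transGen.1 hab).elim (fun h => h ▸ le_rfl)
      fun h => (hu a ha b hb h).le
  have hlo : ∀ x, ∃ b ∈ B, ReflTransGen r x b ∧ ∀ b' ∈ B, ReflTransGen r x b' → u b' ≤ u b := by
    intro x
    obtain ⟨b, ⟨hb, hxb⟩, hmax⟩ := Set.exists_max_image {b | b ∈ B ∧ ReflTransGen r x b} u
      (Set.toFinite _) (hdown x)
    exact ⟨b, hb, hxb, fun b' hb' hxb' => hmax b' ⟨hb', hxb'⟩⟩
  have hhi : ∀ x, ∃ a ∈ B, ReflTransGen r a x ∧ ∀ a' ∈ B, ReflTransGen r a' x → u a ≤ u a' := by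
    intro x
    obtain ⟨a, ⟨ha, hax⟩, hmin⟩ := Set.exists_min_image {a | a ∈ B ∧ ReflTransGen r a x} u
      (Set.toFinite _) (hup x)
    exact ⟨a, ha, hax, fun a' ha' ha'x => hmin a' ⟨ha', ha'x⟩⟩
  choose lo hloB hlo hlomax using hlo
  choose hi hhiB hhi hhimin using hhi
  have lo_mono : ∀ x y, r x y → u (lo y) ≤ u (lo x) := fun x y hxy =>
    hlomax x _ (hloB y) ((hlo y).head hxy)
  have hi_mono : ∀ x y, r x y → u (hi y) ≤ u (hi x) := fun x y hxy =>
    hhimin y _ (hhiB x) ((hhi x).tail hxy)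
  have lo_lt_hi : ∀ x ∉ B, u (lo x) < u (hi x) := by
    intro x hx
    have hxlo := (reflTransGen_iff_eq_or_transGen.1 (hlo x)).resolve_left
      fun h => hx (h ▸ hloB x)
    have hhix := (reflTransGen_iff_eq_or_transGen.1 (hhi x)).resolve_left
      fun h => hx (h ▸ hhiB x)
    exact hu _ (hhiB x) _ (hloB x) (hhix.trans hxlo)
  obtain ⟨t, ht, t_strict⟩ := exists_strictAnti_mem_Icc hacyc
  have hboundary : ∀ b ∈ B, u (lo b) = u b ∧ u (hi b) = u b := fun b hb =>
    ⟨(hu' b hb _ (hloB b) (hlo b)).antisymm (hlomax b b hb .refl),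
      (hhimin b b hb .refl).antisymm (hu' _ (hhiB b) b hb (hhi b))⟩
  refine ⟨fun x => u (lo x) + (u (hi x) - u (lo x)) * t x, fun b hb => ?_, fun x y hxy => ?_⟩
  · simp only [hboundary b hb]
    ring
  have h1 := lo_mono x y hxy
  have h2 := hi_mono x y hxy
  have h3 := t_strict x y hxy
  obtain ⟨hx0, hx1⟩ := ht x
  obtain ⟨hy0, hy1⟩ := ht y
  by_cases hx : x ∈ B
  · by_cases hy : y ∈ B
    · simp only [(hboundary x hx).1, (hboundary x hx).2, (hboundary y hy).1, (hboundary y hy).2]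
      nlinarith [hu x hx y hy (.single hxy)]
    · nlinarith [mul_nonneg (sub_nonneg.2 hx1) (sub_nonneg.2 h1),
        mul_nonneg hx0 (sub_nonneg.2 h2), mul_pos (sub_pos.2 h3) (sub_pos.2 (lo_lt_hi y hy))]
  · nlinarith [mul_nonneg (sub_nonneg.2 hy1) (sub_nonneg.2 h1),
      mul_nonneg hy0 (sub_nonneg.2 h2), mul_pos (sub_pos.2 h3) (sub_pos.2 (lo_lt_hi x hx))]

end Relations

section Real

variable {ι : Type*} {S : Finset ι} {a w : ι → ℝ} {t : ℝ}

lemma exists_lt_and_exists_gt_of_sum_div_sub_eq_zero (hS : S.Nonempty) (hw : ∀ i ∈ S, 0 < w i)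
    (ha : ∀ i ∈ S, t ≠ a i) (h0 : ∑ i ∈ S, w i / (t - a i) = 0) :
    (∃ i ∈ S, a i < t) ∧ ∃ i ∈ S, t < a i := by
  constructor
  · by_contra! hge
    have : ∑ i ∈ S, w i / (t - a i) < 0 := sum_neg (fun i hi => div_neg_of_pos_of_neg (hw i hi)
      (sub_neg.2 ((hge i hi).lt_of_ne (ha i hi)))) hS
    exact this.ne h0
  · by_contra! hle
    have : 0 < ∑ i ∈ S, w i / (t - a i) := sum_pos (fun i hi => div_pos (hw i hi)
      (sub_pos.2 ((hle i hi).lt_of_ne (ha i hi).symm))) hS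
    exact this.ne' h0

/-- The logarithmic derivative of `s ↦ ∏ |s - a i| ^ w i` is `∑ w i / (s - a i)`. -/
lemma sum_div_sub_eq_zero_of_isLocalMax_prod (ha : ∀ i ∈ S, t ≠ a i)
    (hmax : IsLocalMax (fun s => ∏ i ∈ S, |s - a i| ^ w i) t) :
    ∑ i ∈ S, w i / (t - a i) = 0 := by
  set L : ℝ → ℝ := fun s => ∑ i ∈ S, w i * Real.log (s - a i)
  have hexp : ∀ᶠ s in 𝓝 t, ∏ i ∈ S, |s - a i| ^ w i = Real.exp (L s) := by
    filter_upwards [(eventually_all_finset S).2 fun i hi => eventually_ne_nhds (ha i hi)]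
      with s hs
    rw [Real.exp_sum]
    refine prod_congr rfl fun i hi => ?_
    rw [Real.rpow_def_of_pos (abs_pos.2 (sub_ne_zero.2 (hs i hi))), Real.log_abs, mul_comm]
  have hL : IsLocalMax L t := by
    filter_upwards [hmax, hexp] with s hs hse
    rwa [hse, hexp.self_of_nhds, Real.exp_le_exp] at hs
  have hderiv : HasDerivAt L (∑ i ∈ S, w i / (t - a i)) t := by
    refine HasDerivAt.fun_sum fun i hi => ?_
    simpa [div_eq_mul_inv] using
      (((hasDerivAt_id t).sub_const (a i)).log (sub_ne_zero.2 (ha i hi))).const_mul (w i)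
  exact hL.hasDerivAt_eq_zero hderiv

lemma div_sub_div_mul_sub {a b : ℝ} (w : ℝ) (ha : a ≠ 0) (hb : b ≠ 0) :
    (w / a - w / b) * (a - b) = -(w * (a - b) ^ 2 / (a * b)) := by
  field_simp
  ring

end Real

section Orientation

variable {W : Type*} {G : SimpleGraph W}

lemma GraphOrientation.dir_or_dir (σ : GraphOrientation G) {x y : W} (hxy : G.Adj x y) :
    σ.dir x y ∨ σ.dir y x :=
  or_iff_not_imp_left.2 (σ.dir_total y x hxy.symm).2

def GraphOrientation.ofFun (G : SimpleGraph W) (h : W → ℝ) (hne : ∀ x y, G.Adj x y → h x ≠ h y) :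
    GraphOrientation G where
  dir x y := G.Adj x y ∧ h y < h x
  dir_adj _ _ hxy := hxy.1
  dir_total x y hxy := ⟨fun hd hd' => hd.2.not_gt hd'.2,
    fun hd => ⟨hxy, (hne x y hxy).lt_or_gt.resolve_left fun hlt => hd ⟨hxy.symm, hlt⟩⟩⟩

lemma GraphOrientation.ofFun_eq {σ : GraphOrientation G} {h : W → ℝ}
    (hσ : ∀ x y, σ.dir x y → h y < h x) (hne : ∀ x y, G.Adj x y → h x ≠ h y) :
    ofFun G h hne = σ := by
  obtain ⟨dir, dir_adj, dir_total⟩ := σ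
  simp only [ofFun, mk.injEq]
  ext x y
  refine ⟨fun ⟨hxy, hlt⟩ => ?_, fun hd => ⟨dir_adj x y hd, hσ x y hd⟩⟩
  by_contra hd
  exact (hσ y x ((dir_total y x hxy.symm).2 hd)).not_gt hlt

lemma GraphOrientation.ne_of_adj {σ : GraphOrientation G} {h : W → ℝ}
    (hσ : ∀ x y, σ.dir x y → h y < h x) {x y : W} (hxy : G.Adj x y) : h x ≠ h y := by
  rcases σ.dir_or_dir hxy with hd | hd
  · exact (hσ x y hd).ne'
  · exact (hσ y x hd).ne

lemma GraphOrientation.mul_pos_of_ofFun_eq {h₁ h₂ : W → ℝ} {hne₁ : ∀ x y, G.Adj x y → h₁ x ≠ h₁ y}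
    {hne₂ : ∀ x y, G.Adj x y → h₂ x ≠ h₂ y} (heq : ofFun G h₁ hne₁ = ofFun G h₂ hne₂) {x y : W}
    (hxy : G.Adj x y) : 0 < (h₁ x - h₁ y) * (h₂ x - h₂ y) := by
  have hiff : h₁ y < h₁ x ↔ h₂ y < h₂ x := by
    simpa [ofFun, hxy] using congrFun (congrFun (congrArg dir heq) x) y
  rcases (hne₁ x y hxy).lt_or_gt with hlt | hlt
  · have hlt₂ := (hne₂ x y hxy).lt_or_gt.resolve_right fun h => hlt.not_gt (hiff.2 h)
    exact mul_pos_of_neg_of_neg (sub_neg.2 hlt) (sub_neg.2 hlt₂)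
  · exact mul_pos (sub_pos.2 hlt) (sub_pos.2 (hiff.1 hlt))

end Orientation

section Solutions

variable {W : Type*} [Fintype W] {G : SimpleGraph W} {B : Set W} {u : W → ℝ} {𝓔 : Sym2 W → ℝ}

theorem compatible_ofFun (hconn : G.Connected) (hB : B.Nonempty)
    (h𝓔 : ∀ e ∈ G.edgeSet, 0 < 𝓔 e) {h : W → ℝ} (hh : h ∈ EnhSols G B u 𝓔) :
    Compatible G B u (.ofFun G h hh.2.1) := by
  obtain ⟨hhB, hne, henh⟩ := hh
  have hdesc : ∀ x y, (GraphOrientation.ofFun G h hne).dir x y → h y < h x := fun _ _ hd => hd.2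
  refine ⟨fun x hx => (lt_of_transGen hdesc hx).false, fun x hx => ?_,
    fun a ha b hb hab => hhB a ha ▸ hhB b hb ▸ lt_of_transGen hdesc hab⟩
  obtain ⟨b, hb⟩ := hB
  have : Nontrivial W := ⟨x, b, (ne_of_mem_of_not_mem hb hx).symm⟩
  obtain ⟨y, hxy⟩ := hconn.preconnected.exists_adj_of_nontrivial x
  obtain ⟨⟨z, hz, hzx⟩, ⟨z', hz', hxz'⟩⟩ := exists_lt_and_exists_gt_of_sum_div_sub_eq_zero
    ⟨y, (G.mem_neighborFinset x y).2 hxy⟩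
    (fun z hz => h𝓔 _ ((G.mem_neighborFinset x z).1 hz))
    (fun z hz => hne x z ((G.mem_neighborFinset x z).1 hz)) (henh x hx)
  exact ⟨⟨z, (G.mem_neighborFinset x z).1 hz, hzx⟩,
    ⟨z', ((G.mem_neighborFinset x z').1 hz').symm, hxz'⟩⟩

lemma sum_neighborFinset_comm {M : Type*} [AddCommMonoid M] (G : SimpleGraph W) (f : W → W → M) :
    ∑ x, ∑ y ∈ G.neighborFinset x, f x y = ∑ x, ∑ y ∈ G.neighborFinset x, f y x :=
  sum_comm' fun x y => by simp [G.adj_comm]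

lemma sum_neighborFinset_mul_sub (G : SimpleGraph W) {Φ : W → W → ℝ}
    (hΦ : ∀ x y, G.Adj x y → Φ y x = -Φ x y) (g : W → ℝ) :
    ∑ x, ∑ y ∈ G.neighborFinset x, Φ x y * (g x - g y) =
      2 * ∑ x, g x * ∑ y ∈ G.neighborFinset x, Φ x y := by
  have hswap : ∑ x, ∑ y ∈ G.neighborFinset x, Φ x y * g y =
      -∑ x, g x * ∑ y ∈ G.neighborFinset x, Φ x y := by
    rw [sum_neighborFinset_comm, ← sum_neg_distrib]
    refine sum_congr rfl fun x _ => ?_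
    rw [mul_sum, ← sum_neg_distrib]
    exact sum_congr rfl fun y hy => by rw [hΦ x y ((G.mem_neighborFinset x y).1 hy)]; ring
  have hself : ∑ x, ∑ y ∈ G.neighborFinset x, Φ x y * g x =
      ∑ x, g x * ∑ y ∈ G.neighborFinset x, Φ x y :=
    sum_congr rfl fun x _ => by rw [mul_sum]; exact sum_congr rfl fun y _ => mul_comm _ _
  simp only [mul_sub, sum_sub_distrib, hself, hswap]
  ring

lemma SimpleGraph.Reachable.eq_of_forall_adj {X β : Type*} {G : SimpleGraph X} {f : X → β}
    (hf : ∀ x y, G.Adj x y → f x = f y) {x y : X} (hxy : G.Reachable x y) : f x = f y := by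
  obtain ⟨p⟩ := hxy
  induction p with
  | nil => rfl
  | cons hadj _ ih => exact (hf _ _ hadj).trans ih

theorem eq_of_mem_enhSols_of_sameSign (hconn : G.Connected) (hB : B.Nonempty)
    (h𝓔 : ∀ e ∈ G.edgeSet, 0 < 𝓔 e) {h₁ h₂ : W → ℝ} (hh₁ : h₁ ∈ EnhSols G B u 𝓔)
    (hh₂ : h₂ ∈ EnhSols G B u 𝓔)
    (hsign : ∀ x y, G.Adj x y → 0 < (h₁ x - h₁ y) * (h₂ x - h₂ y)) : h₁ = h₂ := by
  obtain ⟨hB₁, hne₁, henh₁⟩ := hh₁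
  obtain ⟨hB₂, hne₂, henh₂⟩ := hh₂
  set Φ : W → W → ℝ := fun x y => 𝓔 s(x, y) / (h₁ x - h₁ y) - 𝓔 s(x, y) / (h₂ x - h₂ y)
  set g : W → ℝ := h₁ - h₂
  have hΦ : ∀ x y, G.Adj x y → Φ y x = -Φ x y := fun x y _ => by
    simp only [Φ, Sym2.eq_swap (a := y), ← neg_sub (h₁ x), ← neg_sub (h₂ x), div_neg]
    ring
  have hterm : ∀ x y, G.Adj x y →
      Φ x y * (g x - g y) = -(𝓔 s(x, y) * ((h₁ x - h₁ y) - (h₂ x - h₂ y)) ^ 2 /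
        ((h₁ x - h₁ y) * (h₂ x - h₂ y))) := fun x y hxy => by
    rw [← div_sub_div_mul_sub _ (sub_ne_zero.2 (hne₁ x y hxy)) (sub_ne_zero.2 (hne₂ x y hxy))]
    simp only [Φ, g, Pi.sub_apply]
    ring
  have hnonpos : ∀ x, ∀ y ∈ G.neighborFinset x, Φ x y * (g x - g y) ≤ 0 := fun x y hy => by
    have hxy := (G.mem_neighborFinset x y).1 hy
    rw [hterm x y hxy, neg_nonpos]
    exact div_nonneg (mul_nonneg (h𝓔 _ hxy).le (sq_nonneg _)) (hsign x y hxy).le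
  have hsum : ∑ x, ∑ y ∈ G.neighborFinset x, Φ x y * (g x - g y) = 0 := by
    rw [sum_neighborFinset_mul_sub G hΦ, sum_eq_zero fun x _ => ?_, mul_zero]
    by_cases hx : x ∈ B
    · simp [g, hB₁ x hx, hB₂ x hx]
    · simp only [Φ, sum_sub_distrib]
      rw [henh₁ x hx, henh₂ x hx, sub_zero, mul_zero]
  have hedge : ∀ x y, G.Adj x y → g x = g y := fun x y hxy => by
    have hzero := (sum_eq_zero_iff_of_nonpos (hnonpos x)).1
      ((sum_eq_zero_iff_of_nonpos fun x _ => sum_nonpos (hnonpos x)).1 hsum x (mem_univ x)) y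
      ((G.mem_neighborFinset x y).2 hxy)
    rw [hterm x y hxy, neg_eq_zero, div_eq_zero_iff, mul_eq_zero, pow_eq_zero_iff two_ne_zero,
      sub_eq_zero] at hzero
    rcases hzero with (h | h) | h
    · exact absurd h (h𝓔 _ hxy).ne'
    · simp only [g, Pi.sub_apply]; linarith
    · exact absurd h (hsign x y hxy).ne'
  obtain ⟨b, hb⟩ := hB
  funext x
  have := (hconn x b).eq_of_forall_adj hedge
  simpa [g, hB₁ b hb, hB₂ b hb, sub_eq_zero] using this

end Solutions

section Energy

variable {W : Type*} {G : SimpleGraph W} {𝓔 : Sym2 W → ℝ}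

noncomputable def edgeFactor (𝓔 : Sym2 W → ℝ) (h : W → ℝ) : Sym2 W → ℝ :=
  Sym2.lift ⟨fun x y => |h x - h y| ^ 𝓔 s(x, y),
    fun x y => by dsimp only; rw [abs_sub_comm, Sym2.eq_swap]⟩

lemma edgeFactor_mk (𝓔 : Sym2 W → ℝ) (h : W → ℝ) (x y : W) :
    edgeFactor 𝓔 h s(x, y) = |h x - h y| ^ 𝓔 s(x, y) :=
  rfl

lemma edgeFactor_pos {h : W → ℝ} (hne : ∀ x y, G.Adj x y → h x ≠ h y) {e : Sym2 W}
    (he : e ∈ G.edgeSet) : 0 < edgeFactor 𝓔 h e := by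
  induction e using Sym2.ind with
  | _ x y => exact Real.rpow_pos_of_pos (abs_pos.2 (sub_ne_zero.2 (hne x y he))) _

variable [Fintype W]

lemma Mfun_eq_prod_edgeFactor (G : SimpleGraph W) (𝓔 : Sym2 W → ℝ) (h : W → ℝ) :
    Mfun G 𝓔 h = ∏ e ∈ G.edgeFinset, edgeFactor 𝓔 h e :=
  rfl

lemma Mfun_pos {h : W → ℝ} (hne : ∀ x y, G.Adj x y → h x ≠ h y) : 0 < Mfun G 𝓔 h :=
  prod_pos fun _ he => edgeFactor_pos hne (G.mem_edgeFinset.1 he)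

lemma ne_of_Mfun_pos (h𝓔 : ∀ e ∈ G.edgeSet, 0 < 𝓔 e) {h : W → ℝ} (hpos : 0 < Mfun G 𝓔 h)
    {x y : W} (hxy : G.Adj x y) : h x ≠ h y := by
  intro heq
  rw [Mfun_eq_prod_edgeFactor] at hpos
  refine hpos.ne' (prod_eq_zero (G.mem_edgeFinset.2 (G.mem_edgeSet.2 hxy)) ?_)
  rw [edgeFactor_mk, heq, sub_self, abs_zero, Real.zero_rpow (h𝓔 _ hxy).ne']

lemma continuous_Mfun (h𝓔 : ∀ e ∈ G.edgeSet, 0 < 𝓔 e) : Continuous (Mfun G 𝓔) := by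
  refine continuous_finsetProd _ fun e he => ?_
  induction e using Sym2.ind with
  | _ x y =>
    exact ((continuous_apply x).sub (continuous_apply y)).abs.rpow_const
      fun _ => Or.inr (h𝓔 _ (G.mem_edgeFinset.1 he)).le

lemma prod_incident_edgeFactor (h : W → ℝ) (x : W) :
    ∏ e ∈ G.edgeFinset with x ∈ e, edgeFactor 𝓔 h e =
      ∏ y ∈ G.neighborFinset x, |h x - h y| ^ 𝓔 s(x, y) := by
  refine (prod_bij (fun y _ => s(x, y)) (fun y hy => ?_) (fun _ _ _ _ => Sym2.congr_right.1)
    (fun e he => ?_) fun _ _ => rfl).symm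
  · simpa using (G.mem_neighborFinset x y).1 hy
  · obtain ⟨he, hxe⟩ := mem_filter.1 he
    induction e using Sym2.ind with
    | _ a b =>
      rcases Sym2.mem_iff.1 hxe with rfl | rfl
      · exact ⟨b, (G.mem_neighborFinset _ _).2 (G.mem_edgeFinset.1 he), rfl⟩
      · exact ⟨a, (G.mem_neighborFinset _ _).2 (G.mem_edgeFinset.1 he).symm, Sym2.eq_swap⟩

lemma Mfun_update (h : W → ℝ) (x : W) (s : ℝ) :
    Mfun G 𝓔 (update h x s) = (∏ y ∈ G.neighborFinset x, |s - h y| ^ 𝓔 s(x, y)) *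
      ∏ e ∈ G.edgeFinset with x ∉ e, edgeFactor 𝓔 h e := by
  rw [Mfun_eq_prod_edgeFactor, ← prod_filter_mul_prod_filter_not G.edgeFinset (x ∈ ·),
    prod_incident_edgeFactor]
  congr 1
  · refine prod_congr rfl fun y hy => ?_
    rw [update_self, update_of_ne ((G.mem_neighborFinset x y).1 hy).ne']
  · refine prod_congr rfl fun e he => ?_
    induction e using Sym2.ind with
    | _ a b =>
      obtain ⟨hxa, hxb⟩ : x ≠ a ∧ x ≠ b := by simpa [Sym2.mem_iff, not_or] using (mem_filter.1 he).2
      rw [edgeFactor_mk, edgeFactor_mk, update_of_ne hxa.symm, update_of_ne hxb.symm]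

theorem enharmonicAt_of_isLocalMax_update {h : W → ℝ} (hne : ∀ x y, G.Adj x y → h x ≠ h y)
    {x : W} (hmax : IsLocalMax (fun s => Mfun G 𝓔 (update h x s)) (h x)) :
    EnharmonicAt G 𝓔 h x := by
  have hC : 0 < ∏ e ∈ G.edgeFinset with x ∉ e, edgeFactor 𝓔 h e :=
    prod_pos fun _ he => edgeFactor_pos hne (G.mem_edgeFinset.1 (mem_filter.1 he).1)
  simp only [Mfun_update] at hmax
  exact sum_div_sub_eq_zero_of_isLocalMax_prod
    (fun y hy => hne x y ((G.mem_neighborFinset x y).1 hy))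
    (hmax.mono fun s hs => le_of_mul_le_mul_right hs hC)

end Energy

section Surjectivity

variable {W : Type*} {G : SimpleGraph W} {B : Set W} {u : W → ℝ} {σ : GraphOrientation G}

def FuSigmaLe (G : SimpleGraph W) (B : Set W) (u : W → ℝ) (σ : GraphOrientation G) :
    Set (W → ℝ) :=
  {h | (∀ b ∈ B, h b = u b) ∧ ∀ x y, σ.dir x y → h y ≤ h x}

lemma FuSigma_subset_FuSigmaLe : FuSigma G B u σ ⊆ FuSigmaLe G B u σ :=
  fun _ hh => ⟨hh.1, fun x y hxy => (hh.2 x y hxy).le⟩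

lemma isClosed_FuSigmaLe : IsClosed (FuSigmaLe G B u σ) := by
  simp only [FuSigmaLe, Set.ofPred_and, Set.ofPred_forall]
  exact (isClosed_iInter fun b => isClosed_iInter fun _ =>
    isClosed_eq (continuous_apply b) continuous_const).inter
    (isClosed_iInter fun x => isClosed_iInter fun y => isClosed_iInter fun _ =>
      isClosed_le (continuous_apply y) (continuous_apply x))

lemma isCompact_FuSigmaLe [Finite W] (hc : Compatible G B u σ) :
    IsCompact (FuSigmaLe G B u σ) := by
  choose lo hlo hxlo using exists_reflTransGen_mem hc.1 fun x hx => (hc.2.1 x hx).1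
  choose hi hhi hhix using exists_mem_reflTransGen hc.1 fun x hx => (hc.2.1 x hx).2
  refine (isCompact_univ_pi fun x => isCompact_Icc (a := u (lo x)) (b := u (hi x)))
    |>.of_isClosed_subset isClosed_FuSigmaLe fun h ⟨hB, hσ⟩ => Set.mem_univ_pi.2 fun x => ⟨?_, ?_⟩
  · exact hB _ (hlo x) ▸ le_of_reflTransGen hσ (hxlo x)
  · exact hB _ (hhi x) ▸ le_of_reflTransGen hσ (hhix x)

lemma Compatible.nonempty_FuSigma [Fintype W] (hc : Compatible G B u σ) :
    (FuSigma G B u σ).Nonempty :=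
  exists_strictAnti_extension hc.1 hc.2.2
    (exists_reflTransGen_mem hc.1 fun x hx => (hc.2.1 x hx).1)
    (exists_mem_reflTransGen hc.1 fun x hx => (hc.2.1 x hx).2)

lemma eventually_update_mem_FuSigma [Finite W] {h : W → ℝ} (hh : h ∈ FuSigma G B u σ) {x : W}
    (hx : x ∉ B) :
    ∀ᶠ s in 𝓝 (h x), update h x s ∈ FuSigma G B u σ := by
  have hcont : Continuous fun s : ℝ => update h x s := continuous_const.update x continuous_id
  have hstrict : ∀ a b, σ.dir a b → ∀ᶠ s in 𝓝 (h x), update h x s b < update h x s a :=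
    fun a b hab => ((continuous_apply b).comp hcont).continuousAt.eventually_lt
      ((continuous_apply a).comp hcont).continuousAt (by simpa using hh.2 a b hab)
  filter_upwards [eventually_all.2 fun a => eventually_all.2 fun b =>
    eventually_imp_distrib_left.2 (hstrict a b)] with s hs
  exact ⟨fun b hb => by rw [update_of_ne (ne_of_mem_of_not_mem hb hx)]; exact hh.1 b hb, hs⟩

theorem Compatible.exists_mem_enhSols_mem_FuSigma [Fintype W] {𝓔 : Sym2 W → ℝ}
    (hc : Compatible G B u σ) (h𝓔 : ∀ e ∈ G.edgeSet, 0 < 𝓔 e) :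
    ∃ h ∈ EnhSols G B u 𝓔, h ∈ FuSigma G B u σ := by
  obtain ⟨h₀, hh₀⟩ := hc.nonempty_FuSigma
  obtain ⟨h, hK, hmax⟩ := (isCompact_FuSigmaLe hc).exists_isMaxOn
    ⟨h₀, FuSigma_subset_FuSigmaLe hh₀⟩ (continuous_Mfun h𝓔).continuousOn
  have hpos : 0 < Mfun G 𝓔 h :=
    (Mfun_pos fun _ _ => σ.ne_of_adj hh₀.2).trans_le (hmax (FuSigma_subset_FuSigmaLe hh₀))
  have hne : ∀ x y, G.Adj x y → h x ≠ h y := fun _ _ => ne_of_Mfun_pos h𝓔 hpos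
  have hσ : h ∈ FuSigma G B u σ :=
    ⟨hK.1, fun x y hxy => (hK.2 x y hxy).lt_of_ne (hne y x (σ.dir_adj x y hxy).symm)⟩
  refine ⟨h, ⟨hK.1, hne, fun x hx => enharmonicAt_of_isLocalMax_update hne ?_⟩, hσ⟩
  filter_upwards [eventually_update_mem_FuSigma hσ hx] with s hs
  simpa using hmax (FuSigma_subset_FuSigmaLe hs)

end Surjectivity

theorem stmt_6_general (G : SimpleGraph V) (hconn : G.Connected)
    (B : Set V) (hB : BoundaryOK G B) (u : V → ℝ)
    (𝓔 : Sym2 V → ℝ) (h𝓔 : ∀ e ∈ G.edgeSet, 0 < 𝓔 e) :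
    ∃ F : {h : V → ℝ // h ∈ EnhSols G B u 𝓔} →
        {σ : GraphOrientation G // Compatible G B u σ},
      (∀ h x y, ((F h).1.dir x y ↔ G.Adj x y ∧ h.1 y < h.1 x)) ∧
      Function.Bijective F := by
  have hBne : B.Nonempty := Set.nonempty_of_ncard_ne_zero (zero_lt_two.trans_le hB.1).ne'
  refine ⟨fun h => ⟨.ofFun G h.1 h.2.2.1, compatible_ofFun hconn hBne h𝓔 h.2⟩,
    fun _ _ _ => Iff.rfl, fun h₁ h₂ heq => Subtype.ext ?_, fun σ => ?_⟩
  · exact eq_of_mem_enhSols_of_sameSign hconn hBne h𝓔 h₁.2 h₂.2 fun x y =>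
      GraphOrientation.mul_pos_of_ofFun_eq (hne₁ := h₁.2.2.1) (hne₂ := h₂.2.2.1)
        (congrArg Subtype.val heq)
  · obtain ⟨h, hh, hσ⟩ := σ.2.exists_mem_enhSols_mem_FuSigma h𝓔
    exact ⟨⟨h, hh⟩, Subtype.ext (GraphOrientation.ofFun_eq hσ.2 hh.2.1)⟩

/-- sending an enharmonic solution h to the orientation directing each edge from
larger to smaller h-value is a bijection onto the compatible orientations. -/
theorem stmt_6 (G : SimpleGraph V) (hconn : G.Connected)
    (B : Set V) (hB : BoundaryOK G B) (u : V → ℝ) (hu : Set.InjOn u B)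
    (𝓔 : Sym2 V → ℝ) (h𝓔 : ∀ e ∈ G.edgeSet, 0 < 𝓔 e) :
    ∃ F : {h : V → ℝ // h ∈ EnhSols G B u 𝓔} →
        {σ : GraphOrientation G // Compatible G B u σ},
      (∀ h x y, ((F h).1.dir x y ↔ G.Adj x y ∧ h.1 y < h.1 x)) ∧
      Function.Bijective F :=
  stmt_6_general G hconn B hB u 𝓔 h𝓔
end

section
/- Let G be a finite connected simple graph with boundary B and injective boundary values u : B → ℝ as in the context. Suppose u takes only rational values and 𝓔 : E → ℝ assigns a positive rational energy to each edge. If h : V → ℝ extends u, satisfies h(x) ≠ h(y) for every edge xy, and satisfies Σ_{y ∼ x} 𝓔_{xy}/(h(x) − h(y)) = 0 at every interior vertex x, then for every vertex v the value h(v) is a totally real algebraic number: h(v) is algebraic over ℚ and every complex root of its minimal polynomial over ℚ is real. -/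
/-!
Let `F = ℚ(h(V)) ⊆ ℝ`. For every `ℚ`-embedding `φ : F → ℂ`, `H = φ ∘ h` is a complex solution
of the same equations with the same rational boundary values. Taking imaginary parts,
`Im H` is harmonic for the positive conductances `𝓔 / |H x - H y|²` and vanishes on `B`, so it
vanishes by the maximum principle: every embedding is real on `h(V)`. If `F` were transcendental,
multiplying the image of one element of a transcendence basis (chosen among the `h v`) by `i`
would give an embedding that is not real there; hence `F / ℚ` is algebraic, and every root of the
minimal polynomial of `h v` is `φ (h v)` for some embedding `φ`, hence real.
-/

attribute [local instance] Classical.propDecidable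

variable {V : Type*} [Fintype V] [DecidableEq V]

open Polynomial in
theorem Complex.isIntegral_I (k : Type*) [CommRing k] [Algebra k ℂ] : IsIntegral k Complex.I :=
  ⟨X ^ 2 + 1, monic_X_pow_add_C 1 two_ne_zero, by simp⟩

theorem IntermediateField.adjoin_adjoin_coe_preimage {k L : Type*} [Field k] [Field L]
    [Algebra k L] {S : Set L} :
    IntermediateField.adjoin k (((↑) : IntermediateField.adjoin k S → L) ⁻¹' S) = ⊤ := by
  apply IntermediateField.map_injective (IntermediateField.adjoin k S).val
  rw [IntermediateField.adjoin_map, ← AlgHom.fieldRange_eq_map, IntermediateField.fieldRange_val,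
    IntermediateField.coe_val, Set.image_preimage_eq_inter_range, Subtype.range_coe,
    Set.inter_eq_left.2 (IntermediateField.subset_adjoin k S)]

theorem AlgebraicIndependent.update_mul {ι k Ω : Type*} [Field k] [Field Ω] [Algebra k Ω]
    [DecidableEq ι] {x : ι → Ω} (hx : AlgebraicIndependent k x) (i : ι) {a : Ω} (ha₀ : a ≠ 0)
    (ha : IsIntegral k a) : AlgebraicIndependent k (Function.update x i (a * x i)) := by
  rw [AlgebraicIndependent.iff_transcendental_adjoin_image i] at hx ⊢
  have himage : Function.update x i (a * x i) '' {i}ᶜ = x '' {i}ᶜ :=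
    Set.image_congr fun j hj => Function.update_of_ne hj _ _
  refine ⟨?_, ?_⟩
  · convert hx.1 using 2 with j
    exact Function.update_of_ne j.2 _ _
  · rw [himage, Function.update_self]
    exact fun halg => hx.2 (.of_mul (mem_nonZeroDivisors_of_ne_zero ha₀)
      ha.tower_top.isAlgebraic halg)

theorem IsTranscendenceBasis.exists_algHom_comp_eq {ι k E Ω : Type*} [Field k] [Field E]
    [Field Ω] [IsAlgClosed Ω] [Algebra k E] [Algebra k Ω] {x : ι → E}
    (hx : IsTranscendenceBasis k x) {c : ι → Ω} (hc : AlgebraicIndependent k c) :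
    ∃ φ : E →ₐ[k] Ω, φ ∘ x = c := by
  let ψ := (IsFractionRing.liftAlgHom (K := FractionRing (MvPolynomial ι k))
    (algebraicIndependent_iff_injective_aeval.1 hc)).comp hx.1.reprField
  have : Algebra.IsAlgebraic (IntermediateField.adjoin k (Set.range x)) E := hx.isAlgebraic_field
  obtain ⟨φ, hφ⟩ := IntermediateField.exists_algHom_of_splits' (E := E) ψ fun s =>
    ⟨Algebra.IsIntegral.isIntegral s, IsAlgClosed.splits _⟩
  refine ⟨φ, funext fun i => ?_⟩
  have hxi : x i ∈ IntermediateField.adjoin k (Set.range x) :=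
    IntermediateField.subset_adjoin k _ ⟨i, rfl⟩
  have hrepr : hx.1.reprField ⟨x i, hxi⟩ = algebraMap (MvPolynomial ι k) _ (MvPolynomial.X i) := by
    change hx.1.aevalEquivField.symm _ = _
    rw [AlgEquiv.symm_apply_eq]
    exact Subtype.ext (by simp)
  calc φ (x i) = ψ ⟨x i, hxi⟩ := DFunLike.congr_fun hφ ⟨x i, hxi⟩
    _ = c i := by simp [ψ, hrepr]

theorem Algebra.IsAlgebraic.of_forall_algHom_im_eq_zero {k E : Type*} [Field k] [Field E]
    [Algebra k E] [Algebra k ℂ] {s : Set E} (hs : IntermediateField.adjoin k s = ⊤)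
    (j : E →ₐ[k] ℂ) (hreal : ∀ φ : E →ₐ[k] ℂ, ∀ x ∈ s, (φ x).im = 0) :
    Algebra.IsAlgebraic k E := by
  by_contra hE
  have : Algebra.Transcendental k E := (Algebra.transcendental_iff_not_isAlgebraic).2 hE
  have : Algebra.IsAlgebraic (Algebra.adjoin k s) E := by
    rw [← IntermediateField.isAlgebraic_adjoin_iff_top, hs, Algebra.isAlgebraic_iff_isIntegral]
    exact Algebra.isIntegral_of_surjective IntermediateField.topEquiv.surjective
  obtain ⟨t, hts, ht⟩ := exists_isTranscendenceBasis_subset (R := k) s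
  obtain ⟨i⟩ := ht.nonempty_iff_transcendental.2 ‹_›
  obtain ⟨φ, hφ⟩ := ht.exists_algHom_comp_eq ((ht.1.map' j.injective).update_mul i
    Complex.I_ne_zero (Complex.isIntegral_I k))
  have hφi : φ i = Complex.I * j i := by simpa using congr_fun hφ i
  have hre : (j i).re = 0 := by simpa [hφi] using hreal φ i (hts i.2)
  have hi : (i : E) = 0 := j.injective (by rw [map_zero]; exact Complex.ext hre (hreal j i (hts i.2)))
  exact ht.1.transcendental i (hi ▸ isAlgebraic_zero)

theorem isAlgebraic_and_minpoly_roots_real_of_forall_algHom {K : Type*} [Field K] [Algebra K ℝ]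
    [Algebra K ℂ] [IsScalarTower K ℝ ℂ] {S : Set ℝ}
    (hS : ∀ φ : IntermediateField.adjoin K S →ₐ[K] ℂ, ∀ x (hx : x ∈ S),
      (φ ⟨x, IntermediateField.subset_adjoin K S hx⟩).im = 0)
    {x : ℝ} (hx : x ∈ S) :
    IsAlgebraic K x ∧ ∀ z : ℂ, Polynomial.aeval z (minpoly K x) = 0 → z.im = 0 := by
  let F := IntermediateField.adjoin K S
  let x' : F := ⟨x, IntermediateField.subset_adjoin K S hx⟩
  have halg : Algebra.IsAlgebraic K F := .of_forall_algHom_im_eq_zero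
    IntermediateField.adjoin_adjoin_coe_preimage ((Complex.ofRealAm.restrictScalars K).comp F.val)
    fun φ y hy => hS φ y hy
  refine ⟨(halg.isAlgebraic x').algHom F.val, fun z hz => ?_⟩
  rw [← IntermediateField.minpoly_eq x'] at hz
  have : z ∈ (minpoly K x').rootSet ℂ :=
    Polynomial.mem_rootSet.2 ⟨minpoly.ne_zero (halg.isAlgebraic x').isIntegral, hz⟩
  rw [← halg.range_eval_eq_rootSet_minpoly (A := ℂ)] at this
  obtain ⟨φ, rfl⟩ := this
  exact hS φ x hx

theorem Complex.im_ofReal_div (r : ℝ) (w : ℂ) : ((r : ℂ) / w).im = -(r / normSq w) * w.im := by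
  rw [Complex.div_im]
  simp only [ofReal_im, ofReal_re, zero_mul, zero_div, zero_sub]
  ring

section Harmonic

omit [DecidableEq V]

variable {G : SimpleGraph V} {B : Set V} {c : Sym2 V → ℝ} {g : V → ℝ}

theorem Harmonic.eq_of_adj_of_forall_le (hg : Harmonic G B c g)
    (hc : ∀ x y, G.Adj x y → 0 < c s(x, y)) {x y : V} (hx : x ∉ B) (hmax : ∀ v, g v ≤ g x)
    (hxy : G.Adj x y) : g y = g x := by
  have hterm : ∀ z ∈ G.neighborFinset x, 0 ≤ c s(x, z) * (g x - g z) := fun z hz =>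
    mul_nonneg (hc x z ((G.mem_neighborFinset x z).1 hz)).le (sub_nonneg.2 (hmax z))
  have hy := (Finset.sum_eq_zero_iff_of_nonneg hterm).1 (hg x hx) y
    ((G.mem_neighborFinset x y).2 hxy)
  have := (mul_eq_zero.1 hy).resolve_left (hc x y hxy).ne'
  linarith

theorem Harmonic.exists_mem_forall_le (hg : Harmonic G B c g) (hG : G.Preconnected)
    (hB : B.Nonempty) (hc : ∀ x y, G.Adj x y → 0 < c s(x, y)) :
    ∃ b ∈ B, ∀ v, g v ≤ g b := by
  obtain ⟨b₀, hb₀⟩ := hB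
  have : Nonempty V := ⟨b₀⟩
  obtain ⟨x₀, hx₀⟩ := Finite.exists_max g
  have key : ∀ {x b : V}, G.Walk x b → b ∈ B → (∀ v, g v ≤ g x) → ∃ b ∈ B, ∀ v, g v ≤ g b := by
    intro x b p hb
    induction p with
    | nil => exact fun hx => ⟨_, hb, hx⟩
    | @cons x y _ hxy _ ih =>
      intro hx
      by_cases hxB : x ∈ B
      · exact ⟨x, hxB, hx⟩
      · exact ih hb fun v => (hx v).trans (hg.eq_of_adj_of_forall_le hc hxB hx hxy).ge
  exact key (hG x₀ b₀).some hb₀ hx₀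

theorem Harmonic.neg (hg : Harmonic G B c g) : Harmonic G B c (-g) := fun x hx => by
  simp only [Pi.neg_apply, neg_sub_neg]
  rw [← neg_eq_zero, ← Finset.sum_neg_distrib]
  simpa only [← mul_neg, neg_sub] using hg x hx

theorem Harmonic.eq_zero (hg : Harmonic G B c g) (hG : G.Preconnected) (hB : B.Nonempty)
    (hc : ∀ x y, G.Adj x y → 0 < c s(x, y)) (hgB : ∀ b ∈ B, g b = 0) (v : V) : g v = 0 := by
  obtain ⟨b, hb, hmax⟩ := hg.exists_mem_forall_le hG hB hc
  obtain ⟨b', hb', hmin⟩ := hg.neg.exists_mem_forall_le hG hB hc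
  have h₁ := hmax v
  have h₂ := hmin v
  simp only [Pi.neg_apply, hgB b hb, hgB b' hb'] at h₁ h₂
  linarith

theorem im_eq_zero_of_sum_div_eq_zero {G : SimpleGraph V} (hG : G.Preconnected) {B : Set V}
    (hB : B.Nonempty) {𝓔 : Sym2 V → ℝ} (h𝓔 : ∀ x y, G.Adj x y → 0 < 𝓔 s(x, y)) {H : V → ℂ}
    (hHB : ∀ b ∈ B, (H b).im = 0) (hne : ∀ x y, G.Adj x y → H x ≠ H y)
    (hH : ∀ x ∉ B, ∑ y ∈ G.neighborFinset x, (𝓔 s(x, y) : ℂ) / (H x - H y) = 0) (v : V) :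
    (H v).im = 0 := by
  let c : Sym2 V → ℝ := fun e => 𝓔 e / Sym2.lift ⟨fun x y => Complex.normSq (H x - H y),
    fun x y => by dsimp only; rw [← Complex.normSq_neg, neg_sub]⟩ e
  have hc : ∀ x y, G.Adj x y → 0 < c s(x, y) := fun x y hxy =>
    div_pos (h𝓔 x y hxy) (Complex.normSq_pos.2 (sub_ne_zero.2 (hne x y hxy)))
  have hharm : Harmonic G B c fun v => (H v).im := fun x hx => by
    have := congrArg Complex.im (hH x hx)
    simp only [Complex.im_sum, Complex.im_ofReal_div, Complex.sub_im, neg_mul,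
      Finset.sum_neg_distrib, Complex.zero_im, neg_eq_zero] at this
    exact this
  exact hharm.eq_zero hG hB hc hHB v

end Harmonic

theorem stmt_7_general (G : SimpleGraph V) (hconn : G.Connected)
    (B : Set V) (hB : BoundaryOK G B) (u : V → ℝ)
    (huQ : ∀ b ∈ B, ∃ q : ℚ, u b = (q : ℝ))
    (𝓔 : Sym2 V → ℝ) (h𝓔 : ∀ e ∈ G.edgeSet, 0 < 𝓔 e ∧ ∃ q : ℚ, 𝓔 e = (q : ℝ))
    (h : V → ℝ) (hbd : ∀ b ∈ B, h b = u b)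
    (hne : ∀ x y, G.Adj x y → h x ≠ h y)
    (henh : ∀ x, x ∉ B → EnharmonicAt G 𝓔 h x) :
    ∀ v : V, IsAlgebraic ℚ (h v) ∧
      ∀ z : ℂ, Polynomial.aeval z (minpoly ℚ (h v)) = 0 → z.im = 0 := by
  have hBne : B.Nonempty := Set.nonempty_of_ncard_ne_zero (by have := hB.1; omega)
  choose! q hq using fun e he => (h𝓔 e he).2
  have henh_q : ∀ x ∉ B, ∑ y ∈ G.neighborFinset x, (q s(x, y) : ℝ) / (h x - h y) = 0 := by
    refine fun x hx => (Finset.sum_congr rfl fun y hy => ?_).trans (henh x hx)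
    rw [hq _ ((G.mem_neighborFinset x y).1 hy)]
  let F := IntermediateField.adjoin ℚ (Set.range h)
  let h' : V → F := fun v => ⟨h v, IntermediateField.subset_adjoin ℚ _ ⟨v, rfl⟩⟩
  refine fun v => isAlgebraic_and_minpoly_roots_real_of_forall_algHom ?_ (Set.mem_range_self v)
  rintro φ _ ⟨w, rfl⟩
  refine im_eq_zero_of_sum_div_eq_zero hconn.preconnected hBne (𝓔 := fun e => q e)
    (H := fun v => φ (h' v)) (fun x y hxy => hq _ (G.mem_edgeSet.2 hxy) ▸ (h𝓔 _ hxy).1)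
    (fun b hb => ?_) (fun x y hxy hφ => hne x y hxy (congrArg Subtype.val (φ.injective hφ)))
    (fun x hx => ?_) w
  · obtain ⟨r, hr⟩ := huQ b hb
    have : h' b = r := Subtype.ext (by simp [h', hbd b hb, hr])
    simp [this]
  · have hF : ∑ y ∈ G.neighborFinset x, (q s(x, y) : F) / (h' x - h' y) = 0 :=
      F.val.injective (by simpa [h'] using henh_q x hx)
    simpa using congrArg φ hF

/-- with rational boundary values and positive rational energies, the values of a
solution of the enharmonic equations are totally real algebraic numbers. -/
theorem stmt_7 (G : SimpleGraph V) (hconn : G.Connected)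
    (B : Set V) (hB : BoundaryOK G B) (u : V → ℝ) (hu : Set.InjOn u B)
    (huQ : ∀ b ∈ B, ∃ q : ℚ, u b = (q : ℝ))
    (𝓔 : Sym2 V → ℝ) (h𝓔 : ∀ e ∈ G.edgeSet, 0 < 𝓔 e ∧ ∃ q : ℚ, 𝓔 e = (q : ℝ))
    (h : V → ℝ) (hbd : ∀ b ∈ B, h b = u b)
    (hne : ∀ x y, G.Adj x y → h x ≠ h y)
    (henh : ∀ x, x ∉ B → EnharmonicAt G 𝓔 h x) :
    ∀ v : V, IsAlgebraic ℚ (h v) ∧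
      ∀ z : ℂ, Polynomial.aeval z (minpoly ℚ (h v)) = 0 → z.im = 0 :=
  stmt_7_general G hconn B hB u huQ 𝓔 h𝓔 h hbd hne henh
end

section
/- Let a₀ < a₁ < ... < a_d be rational numbers and let p be a monic polynomial of degree d with rational coefficients having d real roots r₁ < r₂ < ... < r_d that interlace the a_i, meaning a_{i−1} < r_i < a_i for each i = 1, ..., d. Then there exist unique rational numbers e₀, e₁, ..., e_d such that Σ_{i=0}^{d} e_i · ∏_{j ≠ i} (X − a_j) = p(X) as polynomials, and moreover every e_i is positive (and Σ_{i=0}^{d} e_i = 1). -/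
/-!
The products `∏_{j ≠ i} (X - aⱼ)` are the Lagrange basis polynomials up to the nonzero scalars
`∏_{j ≠ i} (aᵢ - aⱼ)`, so `eᵢ = p(aᵢ) / ∏_{j ≠ i} (aᵢ - aⱼ)` is forced by evaluating at `aᵢ`, and
comparing leading coefficients gives `∑ eᵢ = 1`. Over `ℝ` we have `p = ∏ⱼ (X - rⱼ)`, and
`eᵢ = ∏ⱼ (aᵢ - rⱼ) / (aᵢ - a_{σ(j)})` with `σ` the increasing enumeration of the indices `≠ i`;
interlacing puts `rⱼ` and `a_{σ(j)}` on the same side of `aᵢ`, so every factor is positive.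
-/

open Polynomial Finset Lagrange

theorem Polynomial.map_nodal {R S ι : Type*} [CommRing R] [CommRing S] (f : R →+* S)
    (s : Finset ι) (v : ι → R) : (nodal s v).map f = nodal s (f ∘ v) := by
  simp [nodal, Polynomial.map_prod]

theorem Finset.prod_univ_erase_eq_prod_succAbove {M : Type*} [CommMonoid M] {n : ℕ}
    (f : Fin (n + 1) → M) (k : Fin (n + 1)) :
    ∏ j ∈ univ.erase k, f j = ∏ j : Fin n, f (k.succAbove j) := by
  rw [Fin.univ_succAbove n k, erase_cons, prod_map, Fin.coe_succAboveEmb]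

theorem eq_nodal_of_monic_of_eval_eq_zero {K ι : Type*} [Field K] [Fintype ι] {a : ι → K}
    {P : K[X]} (hP : P.Monic) (hdeg : P.natDegree = Fintype.card ι) (ha : a.Injective)
    (hroot : ∀ i, P.eval (a i) = 0) : P = nodal univ a := by
  refine eq_of_monic_of_dvd_of_natDegree_le nodal_monic hP ?_
    (by rw [natDegree_nodal, hdeg, card_univ])
  exact prod_dvd_of_coprime ((pairwise_coprime_X_sub_C ha).set_pairwise _)
    fun i _ => dvd_iff_isRoot.2 (hroot i)

section NodalErase

variable {ι : Type*} [Fintype ι] [DecidableEq ι]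

theorem eval_sum_C_mul_nodal_erase {R : Type*} [CommRing R] (a : ι → R) (e : ι → R) (k : ι) :
    (∑ i, C (e i) * nodal (univ.erase i) a).eval (a k)
      = e k * (nodal (univ.erase k) a).eval (a k) := by
  simp only [eval_finsetSum, eval_mul, eval_C]
  refine sum_eq_single_of_mem k (mem_univ k) fun i _ hik => ?_
  rw [eval_nodal_at_node (mem_erase.2 ⟨Ne.symm hik, mem_univ k⟩), mul_zero]

theorem coeff_sum_C_mul_nodal_erase {R : Type*} [CommRing R] [Nontrivial R] (a : ι → R)
    (e : ι → R) : (∑ i, C (e i) * nodal (univ.erase i) a).coeff (Fintype.card ι - 1)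
      = ∑ i, e i := by
  refine (finsetSum_coeff _ _ _).trans (sum_congr rfl fun i _ => ?_)
  have hdeg : (nodal (univ.erase i) a).natDegree = Fintype.card ι - 1 := by
    rw [natDegree_nodal, card_erase_of_mem (mem_univ i), card_univ]
  rw [coeff_C_mul, ← hdeg, nodal_monic.coeff_natDegree, mul_one]

variable {K : Type*} [Field K] {a : ι → K}

theorem eval_nodal_erase_self_ne_zero (ha : a.Injective) (k : ι) :
    (nodal (univ.erase k) a).eval (a k) ≠ 0 :=
  eval_nodal_not_at_node fun _ hj => ha.ne (ne_of_mem_erase hj).symm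

theorem eq_div_of_sum_C_mul_nodal_erase_eq (ha : a.Injective) {p : K[X]} {e : ι → K}
    (he : ∑ i, C (e i) * nodal (univ.erase i) a = p) (k : ι) :
    e k = p.eval (a k) / (nodal (univ.erase k) a).eval (a k) := by
  rw [← he, eval_sum_C_mul_nodal_erase, mul_div_cancel_right₀ _
    (eval_nodal_erase_self_ne_zero ha k)]

theorem sum_C_mul_nodal_erase_eq_of_degree_lt (ha : a.Injective) {p : K[X]}
    (hp : p.degree < Fintype.card ι) :
    ∑ i, C (p.eval (a i) / (nodal (univ.erase i) a).eval (a i)) * nodal (univ.erase i) a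
      = p := by
  conv_rhs =>
    rw [eq_interpolate (f := p) (s := univ) ha.injOn (by rwa [card_univ]), interpolate_apply]
  refine sum_congr rfl fun i _ => ?_
  rw [basis_eq_prod_sub_inv_mul_nodal_div (mem_univ i), ← nodal_erase_eq_nodal_div (mem_univ i),
    nodalWeight_eq_eval_nodal_erase_inv, div_eq_mul_inv, C_mul, mul_assoc]

end NodalErase

section Interlacing

variable {K : Type*} [Field K] [LinearOrder K] [IsStrictOrderedRing K] {d : ℕ}
  {a : Fin (d + 1) → K} {r : Fin d → K}

theorem sub_div_sub_succAbove_pos_of_interlace (ha : StrictMono a)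
    (hinter : ∀ i, a i.castSucc < r i ∧ r i < a i.succ) (k : Fin (d + 1)) (j : Fin d) :
    0 < (a k - r j) / (a k - a (k.succAbove j)) := by
  rcases lt_or_ge j.castSucc k with h | h
  · rw [Fin.succAbove_of_castSucc_lt _ _ h]
    refine div_pos (sub_pos.2 ?_) (sub_pos.2 (ha h))
    exact (hinter j).2.trans_le (ha.monotone (Fin.castSucc_lt_iff_succ_le.1 h))
  · rw [Fin.succAbove_of_le_castSucc _ _ h]
    refine div_pos_of_neg_of_neg (sub_neg.2 ?_) (sub_neg.2 (ha (h.trans_lt j.castSucc_lt_succ)))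
    exact (ha.monotone h).trans_lt (hinter j).1

theorem eval_nodal_div_eval_nodal_erase_pos_of_interlace (ha : StrictMono a)
    (hinter : ∀ i, a i.castSucc < r i ∧ r i < a i.succ) (k : Fin (d + 1)) :
    0 < (nodal univ r).eval (a k) / (nodal (univ.erase k) a).eval (a k) := by
  rw [eval_nodal, eval_nodal, prod_univ_erase_eq_prod_succAbove (fun j => a k - a j),
    ← prod_div_distrib]
  exact prod_pos fun j _ => sub_div_sub_succAbove_pos_of_interlace ha hinter k j

end Interlacing

/-- if p is a monic rational polynomial of degree d whose d real roots
interlace the rationals a₀ < ⋯ < a_d, then p is uniquely a rational combination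
Σᵢ eᵢ ∏_{j≠i}(X − aⱼ), and the coefficients eᵢ are positive and sum to 1. -/
theorem stmt_10 (d : ℕ) (a : Fin (d + 1) → ℚ) (ha : StrictMono a)
    (p : Polynomial ℚ) (hmonic : p.Monic) (hdeg : p.natDegree = d)
    (r : Fin d → ℝ) (hr : StrictMono r)
    (hroot : ∀ i, Polynomial.aeval (r i) p = 0)
    (hinter : ∀ i : Fin d, ((a i.castSucc : ℚ) : ℝ) < r i ∧ r i < ((a i.succ : ℚ) : ℝ)) :
    (∃! e : Fin (d + 1) → ℚ,
      ∑ i, Polynomial.C (e i) *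
        ∏ j ∈ Finset.univ.erase i, (Polynomial.X - Polynomial.C (a j)) = p) ∧
    ∀ e : Fin (d + 1) → ℚ,
      (∑ i, Polynomial.C (e i) *
        ∏ j ∈ Finset.univ.erase i, (Polynomial.X - Polynomial.C (a j)) = p) →
      (∀ i, 0 < e i) ∧ ∑ i, e i = 1 := by
  have hp : p.degree < Fintype.card (Fin (d + 1)) := by
    rw [degree_eq_natDegree hmonic.ne_zero, hdeg, Fintype.card_fin]; exact_mod_cast d.lt_succ_self
  refine ⟨⟨_, sum_C_mul_nodal_erase_eq_of_degree_lt ha.injective hp, fun e he =>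
    funext (eq_div_of_sum_C_mul_nodal_erase_eq ha.injective he)⟩,
    fun e (he : ∑ i, C (e i) * nodal (univ.erase i) a = p) => ⟨fun k => ?_, ?_⟩⟩
  · set a' : Fin (d + 1) → ℝ := (↑) ∘ a
    have ha' : StrictMono a' := Rat.cast_strictMono.comp ha
    have he' : ∑ i, C (e i : ℝ) * nodal (univ.erase i) a' = p.map (algebraMap ℚ ℝ) := by
      simp only [← he, Polynomial.map_sum, Polynomial.map_mul, map_C, map_nodal]; rfl
    have hfactor : p.map (algebraMap ℚ ℝ) = nodal univ r :=
      eq_nodal_of_monic_of_eval_eq_zero (hmonic.map _) (by simp [hdeg]) hr.injective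
        fun i => by rw [eval_map_algebraMap, hroot]
    have hpos := eval_nodal_div_eval_nodal_erase_pos_of_interlace ha' hinter k
    rw [← hfactor, ← eq_div_of_sum_C_mul_nodal_erase_eq ha'.injective he' k] at hpos
    exact_mod_cast hpos
  · rw [← coeff_sum_C_mul_nodal_erase a e, he, Fintype.card_fin, Nat.add_sub_cancel, ← hdeg]
    exact hmonic.coeff_natDegree
end
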